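/- Let H be Hurwitz and N the positive definite solution of HᵀN + NH = -2M with M ≻ 0. If Δ(t) satisfies the uniform bound condition 2M - Δ(t)ᵀN - NΔ(t) - 2β σ_max(N) I ≻ 0 for all t (with β ≥ 0), and e solves ė = (H + Δ(t))e + δ(t) with ‖δ(t)‖ ≤ β‖e(t)‖ + c₀, then V(e) = eᵀNe satisfies V̇(t) < 0 whenever ‖e(t)‖ > 2σ_max(N)c₀ / λ, where λ > 0 is the smallest eigenvalue of 2M - Δ(t)ᵀN - NΔ(t) - 2βσ_max(N)I uniformly over t. -/

import Mathlib

open Matrix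
open scoped RealInnerProductSpace

/-! Along the trajectory `V̇ = ⟪e, ((H + Δ)ᵀN + N(H + Δ)) e⟫ + 2⟪δ, N e⟫`. By the Lyapunov
equation the first term is `-⟪e, (S + (λ + 2βσ) I) e⟫`, where `S ⪰ 0` is the uniform margin
matrix minus `λ I`, and `‖N e‖ ≤ σ‖e‖` bounds the second by `2σ(β‖e‖ + c₀)‖e‖`. The `β`-terms
cancel, leaving `V̇ ≤ ‖e‖(2σc₀ - λ‖e‖) < 0`. -/

def IsHurwitz {n : Type*} [Fintype n] [DecidableEq n] (A : Matrix n n ℝ) : Prop :=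
  ∀ μ ∈ spectrum ℂ (A.map (Complex.ofReal)), μ.re < 0

noncomputable def sigmaMax {d : ℕ} {P : Matrix (Fin d) (Fin d) ℝ}
    (hP : P.IsHermitian) : ℝ := ⨆ i, hP.eigenvalues i

section L2OpNorm

open scoped Matrix.Norms.L2Operator

theorem Matrix.IsHermitian.l2_opNorm_eq_norm_eigenvalues {𝕜 n : Type*} [RCLike 𝕜] [Fintype n]
    [DecidableEq n] {A : Matrix n n 𝕜} (hA : A.IsHermitian) : ‖A‖ = ‖hA.eigenvalues‖ := by
  conv_lhs => rw [hA.spectral_theorem]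
  rw [Unitary.conjStarAlgAut_apply, mul_assoc, CStarRing.norm_coe_unitary_mul,
    ← Unitary.coe_star, CStarRing.norm_mul_coe_unitary, l2_opNorm_diagonal]
  simp [Pi.norm_def]

theorem Matrix.PosSemidef.norm_toEuclideanLin_le {d : ℕ} {P : Matrix (Fin d) (Fin d) ℝ}
    (hP : P.PosSemidef) (x : EuclideanSpace ℝ (Fin d)) :
    ‖toEuclideanLin P x‖ ≤ sigmaMax hP.1 * ‖x‖ := by
  have hP_norm : ‖P‖ ≤ sigmaMax hP.1 := by
    rw [hP.1.l2_opNorm_eq_norm_eigenvalues, sigmaMax,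
      pi_norm_le_iff_of_nonneg (Real.iSup_nonneg hP.eigenvalues_nonneg)]
    intro i
    rw [Real.norm_of_nonneg (hP.eigenvalues_nonneg i)]
    exact le_ciSup (Set.finite_range _).bddAbove i
  calc ‖toEuclideanLin P x‖ = ‖toEuclideanCLM (𝕜 := ℝ) P x‖ := rfl
    _ ≤ ‖P‖ * ‖x‖ := (toEuclideanCLM (𝕜 := ℝ) P).le_opNorm x
    _ ≤ sigmaMax hP.1 * ‖x‖ := by gcongr

end L2OpNorm

theorem Matrix.transpose_mul_add_mul_add_of_lyapunov {R n : Type*} [CommRing R] [Fintype n]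
    {H N M : Matrix n n R} (hLyap : Hᵀ * N + N * H = -(2 : R) • M) (A : Matrix n n R) :
    (H + A)ᵀ * N + N * (H + A) = -((2 : R) • M - Aᵀ * N - N * A) := by
  rw [transpose_add, add_mul, mul_add, add_add_add_comm, hLyap]
  module

theorem HasDerivAt.inner_map_self_of_affine {E : Type*} [NormedAddCommGroup E]
    [InnerProductSpace ℝ E] [CompleteSpace E] {N B : E →L[ℝ] E} (hN : IsSelfAdjoint N)
    {x : ℝ → E} {u : E} {t : ℝ} (hx : HasDerivAt x (B (x t) + u) t) :
    HasDerivAt (fun s ↦ ⟪x s, N (x s)⟫)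
      (⟪x t, (star B * N + N * B) (x t)⟫ + 2 * ⟪u, N (x t)⟫) t := by
  refine (hx.inner ℝ (N.hasFDerivAt.comp_hasDerivAt t hx)).congr_deriv ?_
  have hN_symm : ⟪x t, N u⟫ = ⟪u, N (x t)⟫ := by
    rw [real_inner_comm]
    exact hN.isSymmetric u (x t)
  simp only [Function.comp_apply, map_add, inner_add_left, inner_add_right, _root_.add_apply,
    mul_apply_eq_comp, ContinuousLinearMap.star_eq_adjoint,
    ContinuousLinearMap.adjoint_inner_right, hN_symm]
  ring

theorem theorem2_core_estimate_general {d : ℕ}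
    (H M Nm : Matrix (Fin d) (Fin d) ℝ)
    (hN : Nm.PosDef)
    (hLyap : Hᵀ * Nm + Nm * H = -(2 : ℝ) • M)
    (Δ : ℝ → Matrix (Fin d) (Fin d) ℝ) (δ e : ℝ → EuclideanSpace ℝ (Fin d))
    (t₀ β c₀ lam : ℝ) (hc₀ : 0 ≤ c₀) (hlam : 0 < lam)
    (hunif : ∀ t ≥ t₀,
      (((2 : ℝ) • M - (Δ t)ᵀ * Nm - Nm * Δ t -
          (2 * β * sigmaMax hN.1) • (1 : Matrix (Fin d) (Fin d) ℝ)) -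
        lam • (1 : Matrix (Fin d) (Fin d) ℝ)).PosSemidef)
    (hδ : ∀ t ≥ t₀, ‖δ t‖ ≤ β * ‖e t‖ + c₀)
    (hode : ∀ t ≥ t₀,
      HasDerivAt e (Matrix.toEuclideanLin (H + Δ t) (e t) + δ t) t) :
    ∀ t ≥ t₀, ‖e t‖ > 2 * sigmaMax hN.1 * c₀ / lam →
      ∃ v < (0 : ℝ),
        HasDerivAt (fun s => ⟪e s, Matrix.toEuclideanLin Nm (e s)⟫) v t := by
  intro t ht hx
  set σ := sigmaMax hN.1
  set S := (2 : ℝ) • M - (Δ t)ᵀ * Nm - Nm * Δ t - (2 * β * σ) • (1 : Matrix (Fin d) (Fin d) ℝ) -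
    lam • (1 : Matrix (Fin d) (Fin d) ℝ)
  let T : Matrix (Fin d) (Fin d) ℝ ≃⋆ₐ[ℝ] _ := toEuclideanCLM
  have hLyapT : star (T (H + Δ t)) * T Nm + T Nm * T (H + Δ t) =
      -(T S + (lam + 2 * β * σ) • 1) := by
    rw [← map_star, ← map_mul, ← map_mul, ← map_add, star_eq_conjTranspose,
      conjTranspose_eq_transpose_of_trivial, transpose_mul_add_mul_add_of_lyapunov hLyap]
    simp only [S, map_neg, map_sub, map_smul, map_one]
    module
  have hV := (hode t ht).inner_map_self_of_affine (B := T (H + Δ t)) (hN.1.isSelfAdjoint.map T)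
  refine ⟨_, ?_, hV⟩
  have hS : 0 ≤ ⟪e t, T S (e t)⟫ :=
    (isPositive_toEuclideanLin_iff.2 (hunif t ht)).inner_nonneg_right _
  have hcross : ⟪δ t, T Nm (e t)⟫ ≤ (β * ‖e t‖ + c₀) * (σ * ‖e t‖) :=
    (real_inner_le_norm _ _).trans (mul_le_mul (hδ t ht) (hN.posSemidef.norm_toEuclideanLin_le _)
      (norm_nonneg _) ((norm_nonneg _).trans (hδ t ht)))
  have hσ : 0 ≤ σ := Real.iSup_nonneg fun i ↦ (hN.eigenvalues_pos i).le
  have hlarge : 2 * σ * c₀ < lam * ‖e t‖ := by rwa [gt_iff_lt, div_lt_iff₀' hlam] at hx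
  have he : 0 < ‖e t‖ := (div_nonneg (by positivity) hlam.le).trans_lt hx
  rw [hLyapT]
  simp only [_root_.neg_apply, _root_.add_apply, _root_.smul_apply, one_apply_eq_self,
    inner_neg_right, inner_add_right, real_inner_smul_right, real_inner_self_eq_norm_sq]
  nlinarith

/-- Core estimate in the proof of Theorem 2 (equation (A.2)): with `HᵀN + NH = -2M`,
a uniform positive-definiteness margin `2M - Δ(t)ᵀN - NΔ(t) - 2βσ_max(N)I ⪰ λI ≻ 0`,
and a perturbation bounded by `‖δ(t)‖ ≤ β‖e(t)‖ + c₀`, the Lyapunov function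
`V(e) = eᵀNe` is strictly decreasing along `ė = (H+Δ(t))e + δ(t)` whenever
`‖e(t)‖ > 2σ_max(N)c₀/λ`. -/
theorem theorem2_core_estimate {d : ℕ}
    (H M Nm : Matrix (Fin d) (Fin d) ℝ)
    (hH : IsHurwitz H) (hM : M.PosDef) (hMs : M.IsSymm)
    (hN : Nm.PosDef) (hNs : Nm.IsSymm)
    (hLyap : Hᵀ * Nm + Nm * H = -(2 : ℝ) • M)
    (Δ : ℝ → Matrix (Fin d) (Fin d) ℝ) (δ e : ℝ → EuclideanSpace ℝ (Fin d))
    (t₀ β c₀ lam : ℝ) (hβ : 0 ≤ β) (hc₀ : 0 ≤ c₀) (hlam : 0 < lam)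
    (hmargin : ∀ t ≥ t₀,
      ((2 : ℝ) • M - (Δ t)ᵀ * Nm - Nm * Δ t -
        (2 * β * sigmaMax hN.1) • (1 : Matrix (Fin d) (Fin d) ℝ)).PosDef)
    (hunif : ∀ t ≥ t₀,
      (((2 : ℝ) • M - (Δ t)ᵀ * Nm - Nm * Δ t -
          (2 * β * sigmaMax hN.1) • (1 : Matrix (Fin d) (Fin d) ℝ)) -
        lam • (1 : Matrix (Fin d) (Fin d) ℝ)).PosSemidef)
    (hδ : ∀ t ≥ t₀, ‖δ t‖ ≤ β * ‖e t‖ + c₀)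
    (hode : ∀ t ≥ t₀,
      HasDerivAt e (Matrix.toEuclideanLin (H + Δ t) (e t) + δ t) t) :
    ∀ t ≥ t₀, ‖e t‖ > 2 * sigmaMax hN.1 * c₀ / lam →
      ∃ v < (0 : ℝ),
        HasDerivAt (fun s => ⟪e s, Matrix.toEuclideanLin Nm (e s)⟫) v t :=
  theorem2_core_estimate_general H M Nm hN hLyap Δ δ e t₀ β c₀ lam hc₀ hlam hunif hδ hode
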